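/- Let A be an invertible real n×n matrix, B a real m×n matrix, and M the (n+m)×n matrix formed by stacking A on top of B. Suppose ΔQ_B ∈ ℝ^{n+m} satisfies ΔQ_B = M·U for some U ∈ ℝⁿ, and write ΔQ_B in blocks as (Y, E) with Y ∈ ℝⁿ and E ∈ ℝᵐ. Then U = A⁻¹·Y and E = (B·A⁻¹)·Y; that is, the hetero-functional-graph-theoretic state change reproduces exactly the process-based life cycle analysis result E = B·A⁻¹·Y. -/

import Mathlib

namespace Matrix

variable {R l n : Type*} [CommRing R] [Fintype n] [DecidableEq n]

theorem eq_inv_mulVec_of_mulVec_eq {A : Matrix n n R} (hA : IsUnit A.det) {U Y : n → R}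
    (h : A *ᵥ U = Y) : U = A⁻¹ *ᵥ Y := by
  rw [← h, mulVec_mulVec, nonsing_inv_mul A hA, one_mulVec]

theorem eq_inv_mulVec_and_eq_mul_inv_mulVec_of_fromRows_mulVec {A : Matrix n n R}
    (B : Matrix l n R) (hA : IsUnit A.det) {U Y : n → R} {E : l → R}
    (h : fromRows A B *ᵥ U = Sum.elim Y E) : U = A⁻¹ *ᵥ Y ∧ E = (B * A⁻¹) *ᵥ Y := by
  rw [fromRows_mulVec, Sum.elim_eq_iff] at h
  obtain ⟨hY, hE⟩ := h
  have hU : U = A⁻¹ *ᵥ Y := eq_inv_mulVec_of_mulVec_eq hA hY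
  refine ⟨hU, ?_⟩
  rw [← hE, hU, mulVec_mulVec]

end Matrix

/-- If `A` is invertible, `M = [A; B]`, and
`ΔQ_B = M · U` with blocks `Y` (upper) and `E` (lower), then
`U = A⁻¹ · Y` and `E = (B · A⁻¹) · Y`. -/
theorem hfgt_reproduces_lca (n m : ℕ)
    (A : Matrix (Fin n) (Fin n) ℝ) (B : Matrix (Fin m) (Fin n) ℝ)
    (hA : IsUnit A.det)
    (ΔQB : Fin n ⊕ Fin m → ℝ) (U : Fin n → ℝ)
    (h : ΔQB = (Matrix.fromRows A B).mulVec U)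
    (Y : Fin n → ℝ) (E : Fin m → ℝ)
    (hY : Y = ΔQB ∘ Sum.inl) (hE : E = ΔQB ∘ Sum.inr) :
    U = A⁻¹.mulVec Y ∧ E = (B * A⁻¹).mulVec Y := by
  have hblocks : (Matrix.fromRows A B).mulVec U = Sum.elim Y E := by
    rw [hY, hE, Sum.elim_comp_inl_inr, h]
  exact Matrix.eq_inv_mulVec_and_eq_mul_inv_mulVec_of_fromRows_mulVec B hA hblocks
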